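/- Let σ : S → A^⊥ ∥ B and τ : T → B^⊥ ∥ C be receptive and courteous pre-strategies (equivalently, strategies). Then the composition τ ⊙ σ : T ⊙ S → A^⊥ ∥ C is receptive and courteous (equivalently, a strategy). -/

import Mathlib

/-- An event structure presented as raw data: a set of events, a causality
relation and a consistency predicate on (finite) sets of events. -/
structure ES where
  Evt : Type
  le : Evt → Evt → Prop
  Con : Set (Set Evt)

namespace ES

/-- Strict causality. -/
def lt (E : ES) (a b : E.Evt) : Prop := E.le a b ∧ a ≠ b

/-- The axioms of event structures: `le` is a partial order, causes `[e]` are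
finite, consistency is a nonempty collection of finite sets, closed under
subsets, containing all singletons, and closed under adding causal
dependencies. -/
def IsES (E : ES) : Prop :=
  (∀ e, E.le e e) ∧
  (∀ a b c, E.le a b → E.le b c → E.le a c) ∧
  (∀ a b, E.le a b → E.le b a → a = b) ∧
  (∀ e, {e' | E.le e' e}.Finite) ∧
  E.Con.Nonempty ∧
  (∀ X ∈ E.Con, X.Finite) ∧
  (∀ e, ({e} : Set E.Evt) ∈ E.Con) ∧
  (∀ X ∈ E.Con, ∀ Y, Y ⊆ X → Y ∈ E.Con) ∧
  (∀ X ∈ E.Con, ∀ e ∈ X, ∀ e', E.le e' e → insert e' X ∈ E.Con)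

/-- A (finite) configuration: a finite, consistent and down-closed set of events. -/
def Config (E : ES) (x : Set E.Evt) : Prop :=
  x.Finite ∧ (∀ Y, Y ⊆ x → Y.Finite → Y ∈ E.Con) ∧
  ∀ e ∈ x, ∀ e', E.le e' e → e' ∈ x

/-- Immediate causality `e ⇢ e'`. -/
def imc (E : ES) (a b : E.Evt) : Prop :=
  E.lt a b ∧ ∀ c, E.le a c → E.le c b → c = a ∨ c = b

/-- Simple parallel composition of event structures. -/
def par (E F : ES) : ES where
  Evt := E.Evt ⊕ F.Evt
  le := fun p q =>
    match p, q with
    | Sum.inl a, Sum.inl b => E.le a b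
    | Sum.inr a, Sum.inr b => F.le a b
    | _, _ => False
  Con := {X | Sum.inl ⁻¹' X ∈ E.Con ∧ Sum.inr ⁻¹' X ∈ F.Con}

/-- Projection (hiding): restrict an event structure to a subset `V` of events. -/
def proj (E : ES) (V : Set E.Evt) : ES where
  Evt := ↥V
  le := fun a b => E.le a.val b.val
  Con := {X | Subtype.val '' X ∈ E.Con}

end ES

/-- A (total) map of event structures: preserves configurations and is
injective on each configuration. -/
def IsMap (E F : ES) (f : E.Evt → F.Evt) : Prop :=
  (∀ x, E.Config x → F.Config (f '' x)) ∧ ∀ x, E.Config x → Set.InjOn f x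
/-- An event structure with polarities (`true` = positive/Player,
`false` = negative/Opponent). -/
structure ESP extends ES where
  pol : Evt → Bool

namespace ESP

/-- The dual game: polarities reversed. -/
def dual (A : ESP) : ESP where
  toES := A.toES
  pol := fun a => !A.pol a

/-- Simple parallel composition of games. -/
def par (A B : ESP) : ESP where
  toES := A.toES.par B.toES
  pol := Sum.elim A.pol B.pol

end ESP

/-- A pre-strategy on the game `A`: a polarity-preserving map of event
structures `σ : S → A`. -/
def IsPreStrategy (S A : ESP) (σ : S.Evt → A.Evt) : Prop :=
  IsMap S.toES A.toES σ ∧ ∀ s, A.pol (σ s) = S.pol s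

/-- `polExt pol b x y` means `x ⊆ y` and all events of `y \ x` have polarity `b`;
so `polExt pol true x y` is `x ⊆⁺ y` and `polExt pol false x y` is `x ⊆⁻ y`. -/
def polExt {α : Type} (pol : α → Bool) (b : Bool) (x y : Set α) : Prop :=
  x ⊆ y ∧ ∀ a ∈ y, a ∉ x → pol a = b

/-- The Scott order: `x ⊑ y` iff `x ⊇⁻ (x ∩ y) ⊆⁺ y`. -/
def scottLE {α : Type} (pol : α → Bool) (x y : Set α) : Prop :=
  polExt pol false (x ∩ y) x ∧ polExt pol true (x ∩ y) y

/-- Courtesy: immediate causal links other than `− ⇢ +` are sent to immediate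
causal links of the game. -/
def Courteous (S A : ESP) (σ : S.Evt → A.Evt) : Prop :=
  ∀ s s', S.toES.imc s s' → (S.pol s, S.pol s') ≠ (false, true) →
    A.toES.imc (σ s) (σ s')

/-- Receptivity: every negative extension of `σ x` in the game is matched by a
unique extension of `x`. -/
def Receptive (S A : ESP) (σ : S.Evt → A.Evt) : Prop :=
  ∀ x, S.toES.Config x → ∀ a, A.pol a = false → a ∉ σ '' x →
    A.toES.Config (insert a (σ '' x)) →
    ∃! s, s ∉ x ∧ S.toES.Config (insert s x) ∧ σ s = a
/-- The generating relation of copycat causality on `A^⊥ ∥ A`: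
the causality of `A^⊥ ∥ A` together with the links from each negative
occurrence to the corresponding positive occurrence on the other side. -/
def ccGen (A : ESP) : (A.Evt ⊕ A.Evt) → (A.Evt ⊕ A.Evt) → Prop :=
  fun p q => (A.dual.par A).le p q ∨
    (∃ a, A.pol a = true ∧ p = Sum.inl a ∧ q = Sum.inr a) ∨
    (∃ a, A.pol a = false ∧ p = Sum.inr a ∧ q = Sum.inl a)

/-- The copycat structure `CC_A` on the game `A`. -/
def CC (A : ESP) : ESP where
  Evt := A.Evt ⊕ A.Evt
  le := Relation.ReflTransGen (ccGen A)
  Con := {X | {e | ∃ e' ∈ X, Relation.ReflTransGen (ccGen A) e e'} ∈ (A.dual.par A).Con}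
  pol := (A.dual.par A).pol
/-- The relation `◁` generating the order on the graph `G` of a bijection:
`p ◁ q` when both are in `G` and `p.1 <_S q.1` or `p.2 <_T q.2`. -/
def gRel (S T : ES) (G : Set (S.Evt × T.Evt)) :
    (S.Evt × T.Evt) → (S.Evt × T.Evt) → Prop :=
  fun p q => p ∈ G ∧ q ∈ G ∧ (S.lt p.1 q.1 ∨ T.lt p.2 q.2)

/-- The graph `G` is secured: the reflexive-transitive closure of `◁` on `G`
is antisymmetric (hence a partial order). -/
def SecuredOn (S T : ES) (G : Set (S.Evt × T.Evt)) : Prop :=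
  ∀ p q, Relation.ReflTransGen (gRel S T G) p q →
    Relation.ReflTransGen (gRel S T G) q p → p = q

/-- `G` is (the graph of) a secured bijection `φ : x ≃ σ x = τ y ≃ y` between
configurations `x ∈ C(S)` and `y ∈ C(T)`, an element of `SB(σ, τ)`. -/
def IsSecBij (S T A : ES) (σ : S.Evt → A.Evt) (τ : T.Evt → A.Evt)
    (G : Set (S.Evt × T.Evt)) : Prop :=
  S.Config (Prod.fst '' G) ∧ T.Config (Prod.snd '' G) ∧
  (∀ p ∈ G, σ p.1 = τ p.2) ∧
  (∀ s ∈ Prod.fst '' G, ∀ t ∈ Prod.snd '' G, σ s = τ t → (s, t) ∈ G) ∧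
  σ '' (Prod.fst '' G) = τ '' (Prod.snd '' G) ∧
  SecuredOn S T G

/-- `G` has a top (greatest) element for the induced order. -/
def IsPrime (S T : ES) (G : Set (S.Evt × T.Evt)) : Prop :=
  ∃ p ∈ G, ∀ q ∈ G, Relation.ReflTransGen (gRel S T G) q p

/-- The interaction `S ∧ T` of `σ : S → A` and `τ : T → A`: events are the
prime secured bijections, causality is inclusion of graphs, and a finite set
of events is consistent when the union of their graphs is a secured bijection. -/
def Interaction (S T A : ES) (σ : S.Evt → A.Evt) (τ : T.Evt → A.Evt) : ES where
  Evt := {G : Set (S.Evt × T.Evt) // IsSecBij S T A σ τ G ∧ IsPrime S T G}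
  le := fun G G' => G.val ⊆ G'.val
  Con := {X | X.Finite ∧ IsSecBij S T A σ τ (⋃ G ∈ X, G.val)}
/-- The game `A ∥ B ∥ C` (as a plain event structure). -/
def gameABC (A B C : ESP) : ES := (A.toES.par B.toES).par C.toES

/-- `σ ∥ id_C : S ∥ C → A ∥ B ∥ C`. -/
def lmap (A B C S : ESP) (σ : S.Evt → A.Evt ⊕ B.Evt) :
    (S.Evt ⊕ C.Evt) → ((A.Evt ⊕ B.Evt) ⊕ C.Evt) := Sum.map σ id

/-- `id_A ∥ τ : A ∥ T → A ∥ B ∥ C`. -/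
def rmap (A B C T : ESP) (τ : T.Evt → B.Evt ⊕ C.Evt) :
    (A.Evt ⊕ T.Evt) → ((A.Evt ⊕ B.Evt) ⊕ C.Evt) :=
  fun p => match p with
  | Sum.inl a => Sum.inl (Sum.inl a)
  | Sum.inr t => Sum.elim (fun b => Sum.inl (Sum.inr b)) Sum.inr (τ t)

/-- The interaction `T ⊛ S` of `σ : S → A^⊥ ∥ B` and `τ : T → B^⊥ ∥ C`:
the pullback of `σ ∥ id_C` and `id_A ∥ τ` over `A ∥ B ∥ C` (polarities
ignored). -/
def compInterES (A B C S T : ESP) (σ : S.Evt → A.Evt ⊕ B.Evt)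
    (τ : T.Evt → B.Evt ⊕ C.Evt) : ES :=
  Interaction (S.toES.par C.toES) (A.toES.par T.toES) (gameABC A B C)
    (lmap A B C S σ) (rmap A B C T τ)

/-- Visibility of an event of `T ⊛ S`: its top synchronised pair is sent to
`A` or `C` by `τ ⊛ σ`. -/
def compVis (A B C S T : ESP) (σ : S.Evt → A.Evt ⊕ B.Evt)
    (τ : T.Evt → B.Evt ⊕ C.Evt) (G : (compInterES A B C S T σ τ).Evt) : Prop :=
  ∃ p ∈ G.val,
    (∀ q ∈ G.val, Relation.ReflTransGen
      (gRel (S.toES.par C.toES) (A.toES.par T.toES) G.val) q p) ∧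
    ∃ e : A.Evt ⊕ C.Evt, lmap A B C S σ p.1 = Sum.map Sum.inl id e

/-- The composition `T ⊙ S`: the projection of `T ⊛ S` to its visible
events. -/
def compES (A B C S T : ESP) (σ : S.Evt → A.Evt ⊕ B.Evt)
    (τ : T.Evt → B.Evt ⊕ C.Evt) : ES :=
  (compInterES A B C S T σ τ).proj {G | compVis A B C S T σ τ G}

/-- The labelling map `τ ⊙ σ : T ⊙ S → A^⊥ ∥ C` of the composition. -/
noncomputable def compLabel (A B C S T : ESP) (σ : S.Evt → A.Evt ⊕ B.Evt)
    (τ : T.Evt → B.Evt ⊕ C.Evt) (G : (compES A B C S T σ τ).Evt) :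
    A.Evt ⊕ C.Evt :=
  (show compVis A B C S T σ τ G.val from G.prop).choose_spec.2.2.choose

/-- The composition `T ⊙ S` as an esp, with polarities inherited from
`A^⊥ ∥ C`. -/
noncomputable def compESP (A B C S T : ESP) (σ : S.Evt → A.Evt ⊕ B.Evt)
    (τ : T.Evt → B.Evt ⊕ C.Evt) : ESP where
  toES := compES A B C S T σ τ
  pol := fun G => (A.dual.par C).pol (compLabel A B C S T σ τ G)

/-!
A configuration `x` of `T ⊙ S` is encoded by the union `W` of its events, a secured bijection
between configurations of `S ∥ C` and `A ∥ T` (an interaction graph). Conversely every visible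
point `p` of an interaction graph generates an event of `T ⊙ S`, its prime `[p]`, and an event is
the prime of its top point; so the events of `x` correspond to the visible points of `W`, which
makes `τ ⊙ σ` a map of event structures.

Receptivity: a negative extension of `(τ ⊙ σ) x` in `A^⊥` (resp. `C`) is a negative extension for
`σ` (resp. `τ`), whose receptivity supplies a new synchronised point on top of `W`; its prime is
the required event. For uniqueness, courtesy shows that every point below the top `p` of another
extension lies below a visible point with a smaller label, hence in `W`; so `p` is also a
one-point extension of `W`, and uniqueness in the receptivity of `σ` (resp. `τ`) identifies it.

Courtesy: if `H ⇢ H'` with tops `p ≤ p'`, no visible point lies strictly between `p` and `p'`.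
When `H` is positive, courtesy of `σ` or `τ` at the first step above `p` yields a visible point
above `p` with a greater label, which can only be `p'`; when `H'` is negative the same argument
runs at the last step below `p'`. Either way the label of `H` lies below that of `H'`, and
immediately so, since an intermediate label would be carried by an intermediate visible point.
-/

open Relation Set

namespace ES

variable {E F : ES}

theorem Config.of_subset {x y : Set E.Evt} (hx : E.Config x) (hyx : y ⊆ x)
    (hy : ∀ e ∈ y, ∀ e', E.le e' e → e' ∈ y) : E.Config y :=
  ⟨hx.1.subset hyx, fun Y hY hYfin => hx.2.1 Y (hY.trans hyx) hYfin, hy⟩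

theorem config_par_iff {x : Set (E.Evt ⊕ F.Evt)} :
    (E.par F).Config x ↔ E.Config (Sum.inl ⁻¹' x) ∧ F.Config (Sum.inr ⁻¹' x) := by
  constructor
  · rintro ⟨hfin, hcon, hdcl⟩
    refine ⟨⟨hfin.preimage Sum.inl_injective.injOn, fun Y hY hYfin => ?_,
        fun e he e' h => hdcl _ he (Sum.inl e') h⟩,
      ⟨hfin.preimage Sum.inr_injective.injOn, fun Y hY hYfin => ?_,
        fun e he e' h => hdcl _ he (Sum.inr e') h⟩⟩
    · exact Sum.inl_injective.preimage_image Y ▸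
        (hcon (Sum.inl '' Y) (image_subset_iff.2 hY) (hYfin.image _)).1
    · exact Sum.inr_injective.preimage_image Y ▸
        (hcon (Sum.inr '' Y) (image_subset_iff.2 hY) (hYfin.image _)).2
  · rintro ⟨⟨hfin₁, hcon₁, hdcl₁⟩, ⟨hfin₂, hcon₂, hdcl₂⟩⟩
    refine ⟨finite_preimage_inl_and_inr.1 ⟨hfin₁, hfin₂⟩, fun Y hY hYfin =>
      ⟨hcon₁ _ (preimage_mono hY) (hYfin.preimage Sum.inl_injective.injOn),
        hcon₂ _ (preimage_mono hY) (hYfin.preimage Sum.inr_injective.injOn)⟩, ?_⟩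
    rintro (a | b) he (a' | b') h
    exacts [hdcl₁ a he a' h, h.elim, h.elim, hdcl₂ b he b' h]

theorem config_par_insert_inl_iff {x : Set (E.Evt ⊕ F.Evt)} {a : E.Evt} :
    (E.par F).Config (insert (Sum.inl a) x : Set (E.Evt ⊕ F.Evt)) ↔
      E.Config (insert a (Sum.inl ⁻¹' x)) ∧ F.Config (Sum.inr ⁻¹' x) := by
  have h₁ : Sum.inl ⁻¹' (insert (Sum.inl a) x : Set (E.Evt ⊕ F.Evt)) =
      insert a (Sum.inl ⁻¹' x) := by ext; simp
  have h₂ : Sum.inr ⁻¹' (insert (Sum.inl a) x : Set (E.Evt ⊕ F.Evt)) = Sum.inr ⁻¹' x := by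
    ext; simp
  exact config_par_iff.trans (by rw [h₁, h₂])

theorem config_par_insert_inr_iff {x : Set (E.Evt ⊕ F.Evt)} {b : F.Evt} :
    (E.par F).Config (insert (Sum.inr b) x : Set (E.Evt ⊕ F.Evt)) ↔
      E.Config (Sum.inl ⁻¹' x) ∧ F.Config (insert b (Sum.inr ⁻¹' x)) := by
  have h₁ : Sum.inl ⁻¹' (insert (Sum.inr b) x : Set (E.Evt ⊕ F.Evt)) = Sum.inl ⁻¹' x := by
    ext; simp
  have h₂ : Sum.inr ⁻¹' (insert (Sum.inr b) x : Set (E.Evt ⊕ F.Evt)) =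
      insert b (Sum.inr ⁻¹' x) := by ext; simp
  exact config_par_iff.trans (by rw [h₁, h₂])

theorem par_inl_lt_iff {a : E.Evt} {q : E.Evt ⊕ F.Evt} :
    (E.par F).lt (Sum.inl a) q ↔ ∃ b, q = Sum.inl b ∧ E.lt a b := by
  rcases q with b | b
  · simp [ES.lt, ES.par]
  · simp [ES.lt, ES.par]

theorem par_lt_inl_iff {a : E.Evt} {q : E.Evt ⊕ F.Evt} :
    (E.par F).lt q (Sum.inl a) ↔ ∃ b, q = Sum.inl b ∧ E.lt b a := by
  rcases q with b | b
  · simp [ES.lt, ES.par]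
  · simp [ES.lt, ES.par]

theorem par_inr_lt_iff {a : F.Evt} {q : E.Evt ⊕ F.Evt} :
    (E.par F).lt (Sum.inr a) q ↔ ∃ b, q = Sum.inr b ∧ F.lt a b := by
  rcases q with b | b
  · simp [ES.lt, ES.par]
  · simp [ES.lt, ES.par]

theorem par_lt_inr_iff {a : F.Evt} {q : E.Evt ⊕ F.Evt} :
    (E.par F).lt q (Sum.inr a) ↔ ∃ b, q = Sum.inr b ∧ F.lt b a := by
  rcases q with b | b
  · simp [ES.lt, ES.par]
  · simp [ES.lt, ES.par]

@[simp]
theorem par_inl_lt_inl_iff {a b : E.Evt} : (E.par F).lt (Sum.inl a) (Sum.inl b) ↔ E.lt a b := by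
  simp [par_inl_lt_iff]

@[simp]
theorem par_inr_lt_inr_iff {a b : F.Evt} : (E.par F).lt (Sum.inr a) (Sum.inr b) ↔ F.lt a b := by
  simp [par_inr_lt_iff]

end ES

namespace ES.IsES

variable {E : ES} {a b : E.Evt}

theorem exists_le_imc (hE : E.IsES) (h : E.lt a b) : ∃ u, E.le a u ∧ E.imc u b := by
  obtain ⟨hrefl, htrans, hanti, hfin, -⟩ := hE
  obtain ⟨u, ⟨hau, hub⟩, hmax⟩ := Set.Finite.exists_maximalFor (fun u => {e | E.le e u})
    {u | E.le a u ∧ E.lt u b} ((hfin b).subset fun u hu => hu.2.1) ⟨a, hrefl a, h⟩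
  refine ⟨u, hau, hub, fun c huc hcb => or_iff_not_imp_right.2 fun hne => ?_⟩
  have hcu := hmax ⟨htrans _ _ _ hau huc, hcb, hne⟩ fun e he => htrans _ _ _ he huc
  exact hanti _ _ (hcu (hrefl c)) huc

theorem exists_imc_le (hE : E.IsES) (h : E.lt a b) : ∃ v, E.imc a v ∧ E.le v b := by
  obtain ⟨hrefl, htrans, hanti, hfin, -⟩ := hE
  obtain ⟨v, ⟨hav, hvb⟩, hmin⟩ := Set.Finite.exists_minimalFor (fun v => {e | E.le e v})
    {v | E.lt a v ∧ E.le v b} ((hfin b).subset fun v hv => hv.2) ⟨b, h, hrefl b⟩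
  refine ⟨v, ⟨hav, fun c hac hcv => or_iff_not_imp_left.2 fun hne => ?_⟩, hvb⟩
  have hvc := hmin ⟨⟨hac, Ne.symm hne⟩, htrans _ _ _ hcv hvb⟩
    fun e he => htrans _ _ _ he hcv
  exact hanti _ _ hcv (hvc (hrefl v))

end ES.IsES

namespace Courteous

variable {S A : ESP} {σ : S.Evt → A.Evt} {s s₁ : S.Evt}

theorem exists_le_lt_of_neg (hS : S.toES.IsES) (hσc : Courteous S A σ) (hs : S.pol s = false)
    (h : S.toES.lt s₁ s) : ∃ u, S.le s₁ u ∧ S.le u s ∧ A.toES.lt (σ u) (σ s) := by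
  obtain ⟨u, hs₁u, hus⟩ := hS.exists_le_imc h
  exact ⟨u, hs₁u, hus.1.1, (hσc u s hus (by simp [hs])).1⟩

theorem exists_le_lt_of_pos (hS : S.toES.IsES) (hσc : Courteous S A σ) (hs : S.pol s = true)
    (h : S.toES.lt s s₁) : ∃ v, S.le s v ∧ S.le v s₁ ∧ A.toES.lt (σ s) (σ v) := by
  obtain ⟨v, hsv, hvs₁⟩ := hS.exists_imc_le h
  exact ⟨v, hsv.1.1, hvs₁, (hσc s v hsv (by simp [hs])).1⟩

end Courteous

section SecuredBijection

variable {X Y Z : ES} {f : X.Evt → Z.Evt} {g : Y.Evt → Z.Evt}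
  {W D : Set (X.Evt × Y.Evt)} {p q : X.Evt × Y.Evt}

theorem gRel_mono (h : D ⊆ W) (hpq : gRel X Y D p q) : gRel X Y W p q :=
  ⟨h hpq.1, h hpq.2.1, hpq.2.2⟩

theorem SecuredOn.mono (hW : SecuredOn X Y W) (h : D ⊆ W) : SecuredOn X Y D :=
  fun p q hpq hqp =>
    hW p q (ReflTransGen.mono (fun _ _ => gRel_mono h) _ _ hpq)
      (ReflTransGen.mono (fun _ _ => gRel_mono h) _ _ hqp)

theorem SecuredOn.insert_of_maximal (hW : SecuredOn X Y W)
    (hmax : ∀ q, ¬ gRel X Y (insert p W) p q) :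
    SecuredOn X Y (insert p W) := by
  have hfix : ∀ v, ReflTransGen (gRel X Y (insert p W)) p v → v = p := fun v h => by
    rcases h.cases_head with h | ⟨r, hr, -⟩
    exacts [h.symm, (hmax r hr).elim]
  have hrestr : ∀ u v, ReflTransGen (gRel X Y (insert p W)) u v →
      v = p ∨ ReflTransGen (gRel X Y W) u v := by
    intro u v h
    induction h with
    | refl => exact Or.inr .refl
    | @tail v w _ hvw ih =>
      rcases ih with rfl | ih
      · exact (hmax _ hvw).elim
      rcases mem_insert_iff.1 hvw.2.1 with rfl | hw
      · exact Or.inl rfl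
      have hv : v ∈ W := (mem_insert_iff.1 hvw.1).resolve_left fun h => hmax w (h ▸ hvw)
      exact Or.inr (ih.tail ⟨hv, hw, hvw.2.2⟩)
  intro u v huv hvu
  rcases hrestr u v huv with rfl | h₁
  · exact hfix u hvu
  rcases hrestr v u hvu with rfl | h₂
  · exact (hfix v huv).symm
  exact hW u v h₁ h₂

theorem image_fst_eq_image_snd (h : ∀ p ∈ W, f p.1 = g p.2) :
    f '' (Prod.fst '' W) = g '' (Prod.snd '' W) := by
  simp only [image_image]
  exact image_congr h

def IsDownClosedIn (W D : Set (X.Evt × Y.Evt)) : Prop :=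
  D ⊆ W ∧ ∀ p q, gRel X Y W p q → q ∈ D → p ∈ D

def primeOf (W : Set (X.Evt × Y.Evt)) (p : X.Evt × Y.Evt) : Set (X.Evt × Y.Evt) :=
  {q | q ∈ W ∧ ReflTransGen (gRel X Y W) q p}

def IsTopOf (G : Set (X.Evt × Y.Evt)) (p : X.Evt × Y.Evt) : Prop :=
  p ∈ G ∧ ∀ q ∈ G, ReflTransGen (gRel X Y G) q p

theorem IsTopOf.unique (hG : SecuredOn X Y D) (hp : IsTopOf D p) (hq : IsTopOf D q) : p = q :=
  hG p q (hq.2 p hp.1) (hp.2 q hq.1)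

namespace IsDownClosedIn

theorem mem_of_reflTransGen (hD : IsDownClosedIn W D) (hq : q ∈ D)
    (h : ReflTransGen (gRel X Y W) p q) : p ∈ D ∧ ReflTransGen (gRel X Y D) p q := by
  induction h using ReflTransGen.head_induction_on with
  | refl => exact ⟨hq, .refl⟩
  | head hstep _ ih =>
    have hp := hD.2 _ _ hstep ih.1
    exact ⟨hp, .head ⟨hp, ih.1, hstep.2.2⟩ ih.2⟩

theorem biUnion {ι : Type*} {s : Set ι} {D : ι → Set (X.Evt × Y.Evt)}
    (h : ∀ i ∈ s, IsDownClosedIn W (D i)) : IsDownClosedIn W (⋃ i ∈ s, D i) := by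
  refine ⟨iUnion₂_subset fun i hi => (h i hi).1, fun p q hpq hq => ?_⟩
  obtain ⟨i, hi, hqi⟩ := mem_iUnion₂.1 hq
  exact mem_iUnion₂.2 ⟨i, hi, (h i hi).2 p q hpq hqi⟩

theorem insert_of_forall_gRel (hD : IsDownClosedIn W D) (hp : p ∈ W)
    (h : ∀ q, gRel X Y W q p → q ∈ D) :
    IsDownClosedIn W (insert p D) := by
  refine ⟨insert_subset hp hD.1, fun r q hrq hq => ?_⟩
  rcases mem_insert_iff.1 hq with rfl | hq
  exacts [mem_insert_of_mem _ (h r hrq), mem_insert_of_mem _ (hD.2 r q hrq hq)]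

theorem primeOf_subset (hD : IsDownClosedIn W D) (hp : p ∈ D) : primeOf W p ⊆ D :=
  fun _ hq => (hD.mem_of_reflTransGen hp hq.2).1

theorem eq_primeOf (hD : IsDownClosedIn W D) (ht : IsTopOf D p) : D = primeOf W p :=
  Subset.antisymm
    (fun q hq => ⟨hD.1 hq, ReflTransGen.mono (fun _ _ => gRel_mono hD.1) _ _ (ht.2 q hq)⟩)
    (hD.primeOf_subset ht.1)

end IsDownClosedIn

theorem isDownClosedIn_primeOf : IsDownClosedIn W (primeOf W p) :=
  ⟨fun _ hq => hq.1, fun _ _ hrq hq => ⟨hrq.1, .head hrq hq.2⟩⟩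

theorem mem_primeOf_self (hp : p ∈ W) : p ∈ primeOf W p := ⟨hp, .refl⟩

theorem isTopOf_primeOf (hp : p ∈ W) : IsTopOf (primeOf W p) p :=
  ⟨mem_primeOf_self hp, fun _ hq =>
    (isDownClosedIn_primeOf.mem_of_reflTransGen (mem_primeOf_self hp) hq.2).2⟩

namespace IsSecBij

theorem fst_injOn (hg : ∀ y, Y.Config y → InjOn g y) (hW : IsSecBij X Y Z f g W) :
    InjOn Prod.fst W := by
  intro p hp q hq h
  refine Prod.ext h (hg _ hW.2.1 (mem_image_of_mem _ hp) (mem_image_of_mem _ hq) ?_)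
  rw [← hW.2.2.1 p hp, ← hW.2.2.1 q hq, h]

theorem snd_injOn (hf : ∀ x, X.Config x → InjOn f x) (hW : IsSecBij X Y Z f g W) :
    InjOn Prod.snd W := by
  intro p hp q hq h
  refine Prod.ext (hf _ hW.1 (mem_image_of_mem _ hp) (mem_image_of_mem _ hq) ?_) h
  rw [hW.2.2.1 p hp, hW.2.2.1 q hq, h]

theorem reflTransGen_of_fst_le (hg : ∀ y, Y.Config y → InjOn g y) (hW : IsSecBij X Y Z f g W)
    (hp : p ∈ W) (hq : q ∈ W) (h : X.le p.1 q.1) : ReflTransGen (gRel X Y W) p q := by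
  by_cases he : p.1 = q.1
  · rw [hW.fst_injOn hg hp hq he]
  · exact .single ⟨hp, hq, Or.inl ⟨h, he⟩⟩

theorem reflTransGen_of_snd_le (hf : ∀ x, X.Config x → InjOn f x) (hW : IsSecBij X Y Z f g W)
    (hp : p ∈ W) (hq : q ∈ W) (h : Y.le p.2 q.2) : ReflTransGen (gRel X Y W) p q := by
  by_cases he : p.2 = q.2
  · rw [hW.snd_injOn hf hp hq he]
  · exact .single ⟨hp, hq, Or.inr ⟨h, he⟩⟩

theorem of_isDownClosedIn (hg : ∀ y, Y.Config y → InjOn g y) (hW : IsSecBij X Y Z f g W)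
    (hD : IsDownClosedIn W D) : IsSecBij X Y Z f g D := by
  have hlab : ∀ p ∈ D, f p.1 = g p.2 := fun p hp => hW.2.2.1 p (hD.1 hp)
  refine ⟨hW.1.of_subset (image_mono hD.1) ?_, hW.2.1.of_subset (image_mono hD.1) ?_, hlab, ?_,
    image_fst_eq_image_snd hlab, hW.2.2.2.2.2.mono hD.1⟩
  · rintro _ ⟨r, hr, rfl⟩ e he
    obtain ⟨r', hr', rfl⟩ := hW.1.2.2 _ (mem_image_of_mem _ (hD.1 hr)) e he
    by_cases h : r'.1 = r.1
    · exact ⟨r, hr, h.symm⟩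
    · exact ⟨r', hD.2 _ _ ⟨hr', hD.1 hr, Or.inl ⟨he, h⟩⟩ hr, rfl⟩
  · rintro _ ⟨r, hr, rfl⟩ e he
    obtain ⟨r', hr', rfl⟩ := hW.2.1.2.2 _ (mem_image_of_mem _ (hD.1 hr)) e he
    by_cases h : r'.2 = r.2
    · exact ⟨r, hr, h.symm⟩
    · exact ⟨r', hD.2 _ _ ⟨hr', hD.1 hr, Or.inr ⟨he, h⟩⟩ hr, rfl⟩
  · rintro _ ⟨r, hr, rfl⟩ _ ⟨r', hr', rfl⟩ h
    have hmem := hW.2.2.2.1 _ (mem_image_of_mem _ (hD.1 hr)) _ (mem_image_of_mem _ (hD.1 hr')) h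
    rwa [hW.fst_injOn hg hmem (hD.1 hr) rfl]

theorem isDownClosedIn (hf : ∀ x, X.Config x → InjOn f x) (hg : ∀ y, Y.Config y → InjOn g y)
    (hW : IsSecBij X Y Z f g W) (hD : IsSecBij X Y Z f g D) (h : D ⊆ W) :
    IsDownClosedIn W D := by
  refine ⟨h, fun p q hpq hq => ?_⟩
  obtain ⟨hp, -, hlt | hlt⟩ := hpq
  · obtain ⟨r, hr, hrp⟩ := hD.1.2.2 _ (mem_image_of_mem _ hq) _ hlt.1
    rwa [← hW.fst_injOn hg (h hr) hp hrp]
  · obtain ⟨r, hr, hrp⟩ := hD.2.1.2.2 _ (mem_image_of_mem _ hq) _ hlt.1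
    rwa [← hW.snd_injOn hf (h hr) hp hrp]

theorem insert_of_notMem_image (hW : IsSecBij X Y Z f g W)
    (h₁ : X.Config (insert p.1 (Prod.fst '' W))) (h₂ : Y.Config (insert p.2 (Prod.snd '' W)))
    (hp : f p.1 = g p.2) (hnew : f p.1 ∉ f '' (Prod.fst '' W)) :
    IsSecBij X Y Z f g (insert p W) := by
  have hlab : ∀ q ∈ insert p W, f q.1 = g q.2 := forall_mem_insert.2 ⟨hp, hW.2.2.1⟩
  have hold : ∀ q ∈ W, f q.1 ≠ f p.1 := fun q hq h => hnew ⟨q.1, mem_image_of_mem _ hq, h⟩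
  refine ⟨by rwa [image_insert_eq], by rwa [image_insert_eq], hlab, ?_,
    image_fst_eq_image_snd hlab, hW.2.2.2.2.2.insert_of_maximal ?_⟩
  · rintro _ ⟨q, hq, rfl⟩ _ ⟨q', hq', rfl⟩ h
    rcases mem_insert_iff.1 hq with rfl | hq <;> rcases mem_insert_iff.1 hq' with hq'p | hq'
    · rw [hq'p]; exact mem_insert _ _
    · exact absurd (h.trans (hW.2.2.1 q' hq').symm).symm (hold q' hq')
    · rw [hq'p] at h; exact absurd (h.trans hp.symm) (hold q hq)
    · exact mem_insert_of_mem _ (hW.2.2.2.1 _ (mem_image_of_mem _ hq) _ (mem_image_of_mem _ hq') h)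
  · rintro q ⟨-, hq, hlt⟩
    have hqp : q ≠ p := by rintro rfl; rcases hlt with h | h <;> exact h.2 rfl
    have hq := (mem_insert_iff.1 hq).resolve_left hqp
    rcases hlt with hlt | hlt
    · obtain ⟨r, hr, hrp⟩ := hW.1.2.2 _ (mem_image_of_mem _ hq) _ hlt.1
      exact hold r hr (congrArg f hrp)
    · obtain ⟨r, hr, hrp⟩ := hW.2.1.2.2 _ (mem_image_of_mem _ hq) _ hlt.1
      exact hold r hr (by rw [hW.2.2.1 r hr, hrp, hp])

end IsSecBij

end SecuredBijection

section Composition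

variable {A B C S T : ESP} {σ : S.Evt → A.Evt ⊕ B.Evt} {τ : T.Evt → B.Evt ⊕ C.Evt}

@[simp]
theorem lmap_inl (s : S.Evt) : lmap A B C S σ (Sum.inl s) = Sum.inl (σ s) := rfl

@[simp]
theorem lmap_inr (c : C.Evt) : lmap A B C S σ (Sum.inr c) = Sum.inr c := rfl

@[simp]
theorem rmap_inl (a : A.Evt) : rmap A B C T τ (Sum.inl a) = Sum.inl (Sum.inl a) := rfl

theorem lmap_eq_inr_iff {u : S.Evt ⊕ C.Evt} {c : C.Evt} :
    lmap A B C S σ u = Sum.inr c ↔ u = Sum.inr c := by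
  rcases u with s | c' <;> simp

theorem lmap_eq_inl_inl_iff {u : S.Evt ⊕ C.Evt} {a : A.Evt} :
    lmap A B C S σ u = Sum.inl (Sum.inl a) ↔ ∃ s, u = Sum.inl s ∧ σ s = Sum.inl a := by
  rcases u with s | c <;> simp

theorem rmap_eq_inl_inl_iff {v : A.Evt ⊕ T.Evt} {a : A.Evt} :
    rmap A B C T τ v = Sum.inl (Sum.inl a) ↔ v = Sum.inl a := by
  rcases v with a' | t
  · simp
  · rcases h : τ t with b | c <;> simp [rmap, h]

theorem rmap_eq_inr_iff {v : A.Evt ⊕ T.Evt} {c : C.Evt} :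
    rmap A B C T τ v = Sum.inr c ↔ ∃ t, v = Sum.inr t ∧ τ t = Sum.inr c := by
  rcases v with a | t
  · simp
  · rcases h : τ t with b | c' <;> simp [rmap, h]

theorem lmap_injOn (hσ : IsPreStrategy S (A.dual.par B) σ) :
    ∀ x, (S.toES.par C.toES).Config x → InjOn (lmap A B C S σ) x := by
  rintro x hx (s | c) hs (s' | c') hs' h <;> simp at h
  · rw [hσ.1.2 _ (ES.config_par_iff.1 hx).1 hs hs' h]
  · rw [h]

theorem rmap_injOn (hτ : IsPreStrategy T (B.dual.par C) τ) :
    ∀ y, (A.toES.par T.toES).Config y → InjOn (rmap A B C T τ) y := by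
  rintro y hy (a | t) ha (a' | t') ha' h
  · simpa using h
  · rcases h' : τ t' with b | c <;> simp [rmap, h'] at h
  · rcases h' : τ t with b | c <;> simp [rmap, h'] at h
  · have hinj : Function.Injective (Sum.elim (fun b : B.Evt =>
        (Sum.inl (Sum.inr b) : (A.Evt ⊕ B.Evt) ⊕ C.Evt)) Sum.inr) := by
      rintro (b | c) (b' | c') h <;> simp_all
    rw [hτ.1.2 _ (ES.config_par_iff.1 hy).2 ha ha' (hinj h)]

abbrev IsInteractionGraph (σ : S.Evt → A.Evt ⊕ B.Evt) (τ : T.Evt → B.Evt ⊕ C.Evt)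
    (W : Set ((S.toES.par C.toES).Evt × (A.toES.par T.toES).Evt)) : Prop :=
  IsSecBij (S.toES.par C.toES) (A.toES.par T.toES) (gameABC A B C)
    (lmap A B C S σ) (rmap A B C T τ) W

variable {W : Set ((S.toES.par C.toES).Evt × (A.toES.par T.toES).Evt)}
  {p q : (S.toES.par C.toES).Evt × (A.toES.par T.toES).Evt} {e e' : A.Evt ⊕ C.Evt}

theorem visible_inl_iff (hq : lmap A B C S σ q.1 = rmap A B C T τ q.2) {a : A.Evt} :
    lmap A B C S σ q.1 = Sum.map Sum.inl id (Sum.inl a) ↔ q.2 = Sum.inl a := by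
  rw [hq]; exact rmap_eq_inl_inl_iff

theorem visible_inr_iff {c : C.Evt} :
    lmap A B C S σ q.1 = Sum.map Sum.inl id (Sum.inr c) ↔ q.1 = Sum.inr c :=
  lmap_eq_inr_iff

theorem gRel_of_label_lt (hW : IsInteractionGraph σ τ W) (hp : p ∈ W) (hq : q ∈ W)
    (he : lmap A B C S σ p.1 = Sum.map Sum.inl id e)
    (he' : lmap A B C S σ q.1 = Sum.map Sum.inl id e') (h : (A.toES.par C.toES).lt e e') :
    gRel _ _ W p q := by
  refine ⟨hp, hq, ?_⟩
  rcases e with a | c <;> rcases e' with a' | c'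
  · rw [visible_inl_iff (hW.2.2.1 p hp)] at he
    rw [visible_inl_iff (hW.2.2.1 q hq)] at he'
    exact Or.inr (by rw [he, he']; simpa using h)
  · exact h.1.elim
  · exact h.1.elim
  · rw [visible_inr_iff] at he he'
    exact Or.inl (by rw [he, he']; simpa using h)

theorem exists_visible_of_label_le (hW : IsInteractionGraph σ τ W) (hq : q ∈ W)
    (he' : lmap A B C S σ q.1 = Sum.map Sum.inl id e') (h : (A.toES.par C.toES).le e e') :
    ∃ p ∈ W, lmap A B C S σ p.1 = Sum.map Sum.inl id e := by
  rcases e with a | c <;> rcases e' with a' | c'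
  · rw [visible_inl_iff (hW.2.2.1 q hq)] at he'
    obtain ⟨p, hp, hpa⟩ := hW.2.1.2.2 _ ⟨q, hq, he'⟩ (Sum.inl a) h
    exact ⟨p, hp, (visible_inl_iff (hW.2.2.1 p hp)).2 hpa⟩
  · exact h.elim
  · exact h.elim
  · rw [visible_inr_iff] at he'
    obtain ⟨p, hp, hpc⟩ := hW.1.2.2 _ ⟨q, hq, he'⟩ (Sum.inr c) h
    exact ⟨p, hp, visible_inr_iff.2 hpc⟩

def unionGraph (x : Set (compES A B C S T σ τ).Evt) :
    Set ((S.toES.par C.toES).Evt × (A.toES.par T.toES).Evt) :=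
  ⋃ H ∈ x, H.val.val

variable {x : Set (compES A B C S T σ τ).Evt} {H : (compES A B C S T σ τ).Evt}

theorem subset_unionGraph (hH : H ∈ x) : H.val.val ⊆ unionGraph x :=
  subset_biUnion_of_mem (u := fun H : (compES A B C S T σ τ).Evt => H.val.val) hH

theorem unionGraph_mono {y : Set (compES A B C S T σ τ).Evt} (h : x ⊆ y) :
    unionGraph x ⊆ unionGraph y :=
  biUnion_subset_biUnion_left h

theorem biUnion_val_eq_unionGraph :
    ⋃ G ∈ Subtype.val '' x, (G : (compInterES A B C S T σ τ).Evt).val = unionGraph x :=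
  biUnion_image

theorem isInteractionGraph_unionGraph (hx : (compES A B C S T σ τ).Config x) :
    IsInteractionGraph σ τ (unionGraph x) :=
  biUnion_val_eq_unionGraph ▸ (hx.2.1 x subset_rfl hx.1).2

theorem mem_con_of_isInteractionGraph (hfin : x.Finite)
    (h : IsInteractionGraph σ τ (unionGraph x)) : x ∈ (compES A B C S T σ τ).Con :=
  ⟨hfin.image _, biUnion_val_eq_unionGraph.symm ▸ h⟩

theorem exists_isTopOf_compLabel (H : (compES A B C S T σ τ).Evt) :
    ∃ p, IsTopOf H.val.val p ∧
      lmap A B C S σ p.1 = Sum.map Sum.inl id (compLabel A B C S T σ τ H) := by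
  have hv : compVis A B C S T σ τ H.val := H.prop
  exact ⟨hv.choose, ⟨hv.choose_spec.1, hv.choose_spec.2.1⟩, hv.choose_spec.2.2.choose_spec⟩

theorem label_unique (he : lmap A B C S σ p.1 = Sum.map Sum.inl id e)
    (he' : lmap A B C S σ p.1 = Sum.map Sum.inl id e') : e = e' :=
  Sum.map_injective.2 ⟨Sum.inl_injective, Function.injective_id⟩ (he.symm.trans he')

theorem compLabel_eq_of_isTopOf (hp : IsTopOf H.val.val p)
    (he : lmap A B C S σ p.1 = Sum.map Sum.inl id e) : compLabel A B C S T σ τ H = e := by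
  obtain ⟨p₀, hp₀, he₀⟩ := exists_isTopOf_compLabel H
  rw [hp₀.unique H.val.prop.1.2.2.2.2.2 hp] at he₀
  exact label_unique he₀ he

def visiblePrime (hτ : IsPreStrategy T (B.dual.par C) τ) (hW : IsInteractionGraph σ τ W)
    (hp : p ∈ W)
    (he : lmap A B C S σ p.1 = Sum.map Sum.inl id e) : (compES A B C S T σ τ).Evt :=
  ⟨⟨primeOf W p, hW.of_isDownClosedIn (rmap_injOn hτ) isDownClosedIn_primeOf,
    p, isTopOf_primeOf hp⟩, p, (isTopOf_primeOf hp).1, (isTopOf_primeOf hp).2, e, he⟩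

@[simp]
theorem compLabel_visiblePrime {hτ : IsPreStrategy T (B.dual.par C) τ}
    {hW : IsInteractionGraph σ τ W} {hp : p ∈ W}
    {he : lmap A B C S σ p.1 = Sum.map Sum.inl id e} :
    compLabel A B C S T σ τ (visiblePrime hτ hW hp he) = e :=
  compLabel_eq_of_isTopOf (isTopOf_primeOf hp) he

theorem eq_primeOf_of_subset (hσ : IsPreStrategy S (A.dual.par B) σ)
    (hτ : IsPreStrategy T (B.dual.par C) τ) (hW : IsInteractionGraph σ τ W)
    (hsub : H.val.val ⊆ W) (hp : IsTopOf H.val.val p) : H.val.val = primeOf W p :=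
  (hW.isDownClosedIn (lmap_injOn hσ) (rmap_injOn hτ) H.val.prop.1 hsub).eq_primeOf hp

theorem mem_of_subset_unionGraph (hσ : IsPreStrategy S (A.dual.par B) σ)
    (hτ : IsPreStrategy T (B.dual.par C) τ) (hx : (compES A B C S T σ τ).Config x)
    (hsub : H.val.val ⊆ unionGraph x) : H ∈ x := by
  have hW := isInteractionGraph_unionGraph hx
  obtain ⟨p, hp, -⟩ := exists_isTopOf_compLabel H
  obtain ⟨K, hK, hpK⟩ := mem_iUnion₂.1 (hsub hp.1)
  refine hx.2.2 K hK H ?_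
  change H.val.val ⊆ K.val.val
  rw [eq_primeOf_of_subset hσ hτ hW hsub hp]
  exact (hW.isDownClosedIn (lmap_injOn hσ) (rmap_injOn hτ) K.val.prop.1
    (subset_unionGraph hK)).primeOf_subset hpK

theorem mem_compLabel_image_iff (hσ : IsPreStrategy S (A.dual.par B) σ)
    (hτ : IsPreStrategy T (B.dual.par C) τ) (hx : (compES A B C S T σ τ).Config x) :
    e ∈ compLabel A B C S T σ τ '' x ↔
      ∃ q ∈ unionGraph x, lmap A B C S σ q.1 = Sum.map Sum.inl id e := by
  constructor
  · rintro ⟨H, hH, rfl⟩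
    obtain ⟨p, hp, he⟩ := exists_isTopOf_compLabel H
    exact ⟨p, subset_unionGraph hH hp.1, he⟩
  · rintro ⟨q, hq, he⟩
    exact ⟨visiblePrime hτ (isInteractionGraph_unionGraph hx) hq he,
      mem_of_subset_unionGraph hσ hτ hx isDownClosedIn_primeOf.1, compLabel_visiblePrime⟩

theorem preimage_inl_compLabel_image (hσ : IsPreStrategy S (A.dual.par B) σ)
    (hτ : IsPreStrategy T (B.dual.par C) τ) (hx : (compES A B C S T σ τ).Config x) :
    Sum.inl ⁻¹' (compLabel A B C S T σ τ '' x) =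
      Sum.inl ⁻¹' (Prod.snd '' unionGraph x) := by
  have hW := isInteractionGraph_unionGraph hx
  ext a
  simp only [mem_preimage, mem_compLabel_image_iff hσ hτ hx]
  exact exists_congr fun q => and_congr_right fun hq => visible_inl_iff (hW.2.2.1 q hq)

theorem preimage_inr_compLabel_image (hσ : IsPreStrategy S (A.dual.par B) σ)
    (hτ : IsPreStrategy T (B.dual.par C) τ) (hx : (compES A B C S T σ τ).Config x) :
    Sum.inr ⁻¹' (compLabel A B C S T σ τ '' x) =
      Sum.inr ⁻¹' (Prod.fst '' unionGraph x) := by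
  ext c
  simp only [mem_preimage, mem_compLabel_image_iff hσ hτ hx]
  exact exists_congr fun q => and_congr_right fun _ => visible_inr_iff

theorem compLabel_image_config (hσ : IsPreStrategy S (A.dual.par B) σ)
    (hτ : IsPreStrategy T (B.dual.par C) τ) (hx : (compES A B C S T σ τ).Config x) :
    (A.toES.par C.toES).Config (compLabel A B C S T σ τ '' x) := by
  have hW := isInteractionGraph_unionGraph hx
  exact ES.config_par_iff.2
    ⟨preimage_inl_compLabel_image hσ hτ hx ▸ (ES.config_par_iff.1 hW.2.1).1,
      preimage_inr_compLabel_image hσ hτ hx ▸ (ES.config_par_iff.1 hW.1).2⟩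

theorem compLabel_injOn (hσ : IsPreStrategy S (A.dual.par B) σ)
    (hτ : IsPreStrategy T (B.dual.par C) τ) (hx : (compES A B C S T σ τ).Config x) :
    InjOn (compLabel A B C S T σ τ) x := by
  have hW := isInteractionGraph_unionGraph hx
  intro H hH H' hH' h
  obtain ⟨p, hp, he⟩ := exists_isTopOf_compLabel H
  obtain ⟨p', hp', he'⟩ := exists_isTopOf_compLabel H'
  have hpW := subset_unionGraph hH hp.1
  have hp'W := subset_unionGraph hH' hp'.1
  have hpp' : p = p' := hW.fst_injOn (rmap_injOn hτ) hpW hp'W <|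
    lmap_injOn hσ _ hW.1 (mem_image_of_mem _ hpW) (mem_image_of_mem _ hp'W) (by rw [he, he', h])
  refine Subtype.ext (Subtype.ext ?_)
  rw [eq_primeOf_of_subset hσ hτ hW (subset_unionGraph hH) hp,
    eq_primeOf_of_subset hσ hτ hW (subset_unionGraph hH') hp', hpp']

theorem isPreStrategy_compLabel (hσ : IsPreStrategy S (A.dual.par B) σ)
    (hτ : IsPreStrategy T (B.dual.par C) τ) :
    IsPreStrategy (compESP A B C S T σ τ) (A.dual.par C) (compLabel A B C S T σ τ) :=
  ⟨⟨fun _ hx => compLabel_image_config hσ hτ hx, fun _ hx => compLabel_injOn hσ hτ hx⟩,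
    fun _ => rfl⟩

theorem pol_eq_of_eq_inl (hσ : IsPreStrategy S (A.dual.par B) σ) {s : S.Evt} {a : A.Evt}
    (h : σ s = Sum.inl a) : S.pol s = (A.dual.par C).pol (Sum.inl a) := by
  rw [← hσ.2 s, h]; rfl

theorem pol_eq_of_eq_inr (hτ : IsPreStrategy T (B.dual.par C) τ) {t : T.Evt} {c : C.Evt}
    (h : τ t = Sum.inr c) : T.pol t = (A.dual.par C).pol (Sum.inr c) := by
  rw [← hτ.2 t, h]; rfl

variable {r : (S.toES.par C.toES).Evt × (A.toES.par T.toES).Evt}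

theorem exists_visible_lt_of_neg (hS : S.toES.IsES) (hT : T.toES.IsES)
    (hσ : IsPreStrategy S (A.dual.par B) σ) (hτ : IsPreStrategy T (B.dual.par C) τ)
    (hσc : Courteous S (A.dual.par B) σ) (hτc : Courteous T (B.dual.par C) τ)
    (hW : IsInteractionGraph σ τ W) (hp : p ∈ W)
    (he : lmap A B C S σ p.1 = Sum.map Sum.inl id e) (hneg : (A.dual.par C).pol e = false)
    (hr : gRel _ _ W r p) :
    ∃ q ∈ W, ∃ e₀, lmap A B C S σ q.1 = Sum.map Sum.inl id e₀ ∧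
      (A.toES.par C.toES).lt e₀ e ∧ ReflTransGen (gRel _ _ W) r q := by
  obtain ⟨hr, -, hlt⟩ := hr
  rcases e with a | c
  · obtain ⟨s, hps, hsa⟩ := lmap_eq_inl_inl_iff.1 he
    rcases hlt with hlt | hlt
    · obtain ⟨s₁, hrs, hs₁⟩ := ES.par_lt_inl_iff.1 (hps ▸ hlt)
      obtain ⟨u, hs₁u, hus, hua⟩ :=
        hσc.exists_le_lt_of_neg hS ((pol_eq_of_eq_inl hσ hsa).trans hneg) hs₁
      rw [hsa] at hua
      obtain ⟨a₀, hua, ha₀⟩ := ES.par_lt_inl_iff.1 hua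
      obtain ⟨q, hq, hqu⟩ := hW.1.2.2 _ (mem_image_of_mem _ hp) (Sum.inl u) (hps ▸ hus)
      exact ⟨q, hq, Sum.inl a₀, by rw [hqu, lmap_inl, hua]; rfl,
        ES.par_inl_lt_inl_iff.2 ha₀,
        hW.reflTransGen_of_fst_le (rmap_injOn hτ) hr hq (by rw [hrs, hqu]; exact hs₁u)⟩
    · rw [(visible_inl_iff (hW.2.2.1 p hp)).1 he] at hlt
      obtain ⟨a₀, hra, ha₀⟩ := ES.par_lt_inl_iff.1 hlt
      exact ⟨r, hr, Sum.inl a₀, (visible_inl_iff (hW.2.2.1 r hr)).2 hra,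
        ES.par_inl_lt_inl_iff.2 ha₀, .refl⟩
  · obtain ⟨t, hpt, htc⟩ := rmap_eq_inr_iff.1 ((hW.2.2.1 p hp).symm.trans he)
    rcases hlt with hlt | hlt
    · rw [visible_inr_iff.1 he] at hlt
      obtain ⟨c₀, hrc, hc₀⟩ := ES.par_lt_inr_iff.1 hlt
      exact ⟨r, hr, Sum.inr c₀, visible_inr_iff.2 hrc, ES.par_inr_lt_inr_iff.2 hc₀, .refl⟩
    · obtain ⟨t₁, hrt, ht₁⟩ := ES.par_lt_inr_iff.1 (hpt ▸ hlt)
      obtain ⟨u, ht₁u, hut, huc⟩ :=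
        hτc.exists_le_lt_of_neg hT ((pol_eq_of_eq_inr hτ htc).trans hneg) ht₁
      rw [htc] at huc
      obtain ⟨c₀, huc, hc₀⟩ := ES.par_lt_inr_iff.1 huc
      obtain ⟨q, hq, hqu⟩ := hW.2.1.2.2 _ (mem_image_of_mem _ hp) (Sum.inr u) (hpt ▸ hut)
      refine ⟨q, hq, Sum.inr c₀, ?_, ES.par_inr_lt_inr_iff.2 hc₀,
        hW.reflTransGen_of_snd_le (lmap_injOn hσ) hr hq (by rw [hrt, hqu]; exact ht₁u)⟩
      rw [hW.2.2.1 q hq]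
      exact rmap_eq_inr_iff.2 ⟨u, hqu, huc⟩

theorem exists_visible_gt_of_pos (hS : S.toES.IsES) (hT : T.toES.IsES)
    (hσ : IsPreStrategy S (A.dual.par B) σ) (hτ : IsPreStrategy T (B.dual.par C) τ)
    (hσc : Courteous S (A.dual.par B) σ) (hτc : Courteous T (B.dual.par C) τ)
    (hW : IsInteractionGraph σ τ W) (hp : p ∈ W)
    (he : lmap A B C S σ p.1 = Sum.map Sum.inl id e) (hpos : (A.dual.par C).pol e = true)
    (hr : gRel _ _ W p r) :
    ∃ q ∈ W, ∃ e₁, lmap A B C S σ q.1 = Sum.map Sum.inl id e₁ ∧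
      (A.toES.par C.toES).lt e e₁ ∧ ReflTransGen (gRel _ _ W) q r := by
  obtain ⟨-, hr, hlt⟩ := hr
  rcases e with a | c
  · obtain ⟨s, hps, hsa⟩ := lmap_eq_inl_inl_iff.1 he
    rcases hlt with hlt | hlt
    · obtain ⟨s₁, hrs, hs₁⟩ := ES.par_inl_lt_iff.1 (hps ▸ hlt)
      obtain ⟨v, hsv, hvs₁, hav⟩ :=
        hσc.exists_le_lt_of_pos hS ((pol_eq_of_eq_inl hσ hsa).trans hpos) hs₁
      rw [hsa] at hav
      obtain ⟨a₁, hva, ha₁⟩ := ES.par_inl_lt_iff.1 hav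
      obtain ⟨q, hq, hqv⟩ := hW.1.2.2 _ (mem_image_of_mem _ hr) (Sum.inl v) (hrs ▸ hvs₁)
      exact ⟨q, hq, Sum.inl a₁, by rw [hqv, lmap_inl, hva]; rfl,
        ES.par_inl_lt_inl_iff.2 ha₁,
        hW.reflTransGen_of_fst_le (rmap_injOn hτ) hq hr (by rw [hrs, hqv]; exact hvs₁)⟩
    · rw [(visible_inl_iff (hW.2.2.1 p hp)).1 he] at hlt
      obtain ⟨a₁, hra, ha₁⟩ := ES.par_inl_lt_iff.1 hlt
      exact ⟨r, hr, Sum.inl a₁, (visible_inl_iff (hW.2.2.1 r hr)).2 hra,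
        ES.par_inl_lt_inl_iff.2 ha₁, .refl⟩
  · obtain ⟨t, hpt, htc⟩ := rmap_eq_inr_iff.1 ((hW.2.2.1 p hp).symm.trans he)
    rcases hlt with hlt | hlt
    · rw [visible_inr_iff.1 he] at hlt
      obtain ⟨c₁, hrc, hc₁⟩ := ES.par_inr_lt_iff.1 hlt
      exact ⟨r, hr, Sum.inr c₁, visible_inr_iff.2 hrc, ES.par_inr_lt_inr_iff.2 hc₁, .refl⟩
    · obtain ⟨t₁, hrt, ht₁⟩ := ES.par_inr_lt_iff.1 (hpt ▸ hlt)
      obtain ⟨v, htv, hvt₁, hcv⟩ :=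
        hτc.exists_le_lt_of_pos hT ((pol_eq_of_eq_inr hτ htc).trans hpos) ht₁
      rw [htc] at hcv
      obtain ⟨c₁, hvc, hc₁⟩ := ES.par_inr_lt_iff.1 hcv
      obtain ⟨q, hq, hqv⟩ := hW.2.1.2.2 _ (mem_image_of_mem _ hr) (Sum.inr v) (hrt ▸ hvt₁)
      refine ⟨q, hq, Sum.inr c₁, ?_, ES.par_inr_lt_inr_iff.2 hc₁,
        hW.reflTransGen_of_snd_le (lmap_injOn hσ) hq hr (by rw [hrt, hqv]; exact hvt₁)⟩
      rw [hW.2.2.1 q hq]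
      exact rmap_eq_inr_iff.2 ⟨v, hqv, hvc⟩

theorem preimage_inl_image_fst_unionGraph (hσ : IsPreStrategy S (A.dual.par B) σ)
    (hτ : IsPreStrategy T (B.dual.par C) τ) (hx : (compES A B C S T σ τ).Config x) :
    Sum.inl ⁻¹' (σ '' (Sum.inl ⁻¹' (Prod.fst '' unionGraph x))) =
      Sum.inl ⁻¹' (compLabel A B C S T σ τ '' x) := by
  ext a
  simp only [mem_preimage, mem_compLabel_image_iff hσ hτ hx, mem_image]
  constructor
  · rintro ⟨s, ⟨q, hq, hqs⟩, hsa⟩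
    exact ⟨q, hq, by rw [hqs, lmap_inl, hsa]; rfl⟩
  · rintro ⟨q, hq, hqa⟩
    obtain ⟨s, hqs, hsa⟩ := lmap_eq_inl_inl_iff.1 hqa
    exact ⟨s, ⟨q, hq, hqs⟩, hsa⟩

theorem preimage_inr_image_snd_unionGraph (hσ : IsPreStrategy S (A.dual.par B) σ)
    (hτ : IsPreStrategy T (B.dual.par C) τ) (hx : (compES A B C S T σ τ).Config x) :
    Sum.inr ⁻¹' (τ '' (Sum.inr ⁻¹' (Prod.snd '' unionGraph x))) =
      Sum.inr ⁻¹' (compLabel A B C S T σ τ '' x) := by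
  have hW := isInteractionGraph_unionGraph hx
  ext c
  simp only [mem_preimage, mem_compLabel_image_iff hσ hτ hx, mem_image]
  constructor
  · rintro ⟨t, ⟨q, hq, hqt⟩, htc⟩
    exact ⟨q, hq, by rw [hW.2.2.1 q hq, hqt]; exact rmap_eq_inr_iff.2 ⟨t, rfl, htc⟩⟩
  · rintro ⟨q, hq, hqc⟩
    obtain ⟨t, hqt, htc⟩ := rmap_eq_inr_iff.1 ((hW.2.2.1 q hq).symm.trans hqc)
    exact ⟨t, ⟨q, hq, hqt⟩, htc⟩

theorem notMem_and_config_insert_visiblePrime (hσ : IsPreStrategy S (A.dual.par B) σ)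
    (hτ : IsPreStrategy T (B.dual.par C) τ) (hx : (compES A B C S T σ τ).Config x)
    (hp : p ∉ unionGraph x) (hWp : IsInteractionGraph σ τ (insert p (unionGraph x)))
    (he : lmap A B C S σ p.1 = Sum.map Sum.inl id e) :
    visiblePrime hτ hWp (mem_insert p _) he ∉ x ∧
      (compES A B C S T σ τ).Config (insert (visiblePrime hτ hWp (mem_insert p _) he) x) := by
  set H := visiblePrime hτ hWp (mem_insert p _) he
  have hdcl : ∀ K : (compES A B C S T σ τ).Evt, K.val.val ⊆ insert p (unionGraph x) →
      IsDownClosedIn (insert p (unionGraph x)) K.val.val := fun K hK =>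
    hWp.isDownClosedIn (lmap_injOn hσ) (rmap_injOn hτ) K.val.prop.1 hK
  have hsub : ∀ K ∈ insert H x, K.val.val ⊆ insert p (unionGraph x) := by
    rintro K hK
    rcases mem_insert_iff.1 hK with rfl | hK
    exacts [isDownClosedIn_primeOf.1, (subset_unionGraph hK).trans (subset_insert _ _)]
  refine ⟨fun hH => hp (subset_unionGraph hH (mem_primeOf_self (mem_insert _ _))),
    hx.1.insert _, fun Y hY hYfin => ?_, fun K hK K' hK'K => ?_⟩
  · exact mem_con_of_isInteractionGraph hYfin (hWp.of_isDownClosedIn (rmap_injOn hτ)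
      (IsDownClosedIn.biUnion fun K hK => hdcl K (hsub K (hY hK))))
  change K'.val.val ⊆ K.val.val at hK'K
  rcases mem_insert_iff.1 hK with rfl | hK
  · by_cases hpK' : p ∈ K'.val.val
    · have hK' : K' = H := Subtype.ext (Subtype.ext (hK'K.antisymm
        ((hdcl K' (hK'K.trans isDownClosedIn_primeOf.1)).primeOf_subset hpK')))
      exact hK' ▸ mem_insert _ _
    · refine mem_insert_of_mem _ (mem_of_subset_unionGraph hσ hτ hx fun q hq => ?_)
      exact (mem_insert_iff.1 (isDownClosedIn_primeOf.1 (hK'K hq))).resolve_left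
        fun h => hpK' (h ▸ hq)
  · exact mem_insert_of_mem _ (hx.2.2 K hK K' hK'K)

theorem isInteractionGraph_insert_of_isTopOf (hS : S.toES.IsES) (hT : T.toES.IsES)
    (hσ : IsPreStrategy S (A.dual.par B) σ) (hτ : IsPreStrategy T (B.dual.par C) τ)
    (hσc : Courteous S (A.dual.par B) σ) (hτc : Courteous T (B.dual.par C) τ)
    (hx : (compES A B C S T σ τ).Config x) (hHx : (compES A B C S T σ τ).Config (insert H x))
    (hp : IsTopOf H.val.val p) (he : lmap A B C S σ p.1 = Sum.map Sum.inl id e)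
    (hneg : (A.dual.par C).pol e = false) :
    IsInteractionGraph σ τ (insert p (unionGraph x)) ∧
      H.val.val = primeOf (insert p (unionGraph x)) p := by
  have hW := isInteractionGraph_unionGraph hx
  have hW' := isInteractionGraph_unionGraph hHx
  have hHW' := subset_unionGraph (mem_insert H x)
  have hWW' := hW'.isDownClosedIn (lmap_injOn hσ) (rmap_injOn hτ) hW
    (unionGraph_mono (subset_insert H x))
  have hpred : ∀ q, gRel _ _ (unionGraph (insert H x)) q p → q ∈ unionGraph x := by
    intro q hqp
    obtain ⟨q₀, hq₀, e₀, he₀, hlt, hqq₀⟩ :=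
      exists_visible_lt_of_neg hS hT hσ hτ hσc hτc hW' (hHW' hp.1) he hneg hqp
    have hK := mem_of_subset_unionGraph hσ hτ hHx (H := visiblePrime hτ hW' hq₀ he₀)
      isDownClosedIn_primeOf.1
    have hKx : visiblePrime hτ hW' hq₀ he₀ ∈ x := by
      refine (mem_insert_iff.1 hK).resolve_left fun h => hlt.2 ?_
      have hlab := congrArg (compLabel A B C S T σ τ) h
      rwa [compLabel_visiblePrime, compLabel_eq_of_isTopOf hp he] at hlab
    exact (hWW'.mem_of_reflTransGen (subset_unionGraph hKx (mem_primeOf_self hq₀)) hqq₀).1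
  have hD := hWW'.insert_of_forall_gRel (hHW' hp.1) hpred
  have hWp := hW'.of_isDownClosedIn (rmap_injOn hτ) hD
  refine ⟨hWp, eq_primeOf_of_subset hσ hτ hWp ?_ hp⟩
  rw [eq_primeOf_of_subset hσ hτ hW' hHW' hp]
  exact hD.primeOf_subset (mem_insert _ _)

theorem existsUnique_extension (hS : S.toES.IsES) (hT : T.toES.IsES)
    (hσ : IsPreStrategy S (A.dual.par B) σ) (hτ : IsPreStrategy T (B.dual.par C) τ)
    (hσc : Courteous S (A.dual.par B) σ) (hτc : Courteous T (B.dual.par C) τ)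
    (hx : (compES A B C S T σ τ).Config x) (hneg : (A.dual.par C).pol e = false)
    (hp : p ∉ unionGraph x) (hWp : IsInteractionGraph σ τ (insert p (unionGraph x)))
    (he : lmap A B C S σ p.1 = Sum.map Sum.inl id e)
    (huniq : ∀ q, IsInteractionGraph σ τ (insert q (unionGraph x)) →
      lmap A B C S σ q.1 = Sum.map Sum.inl id e → q = p) :
    ∃! H, H ∉ x ∧ (compES A B C S T σ τ).Config (insert H x) ∧
      compLabel A B C S T σ τ H = e := by
  obtain ⟨hHx, hHcfg⟩ := notMem_and_config_insert_visiblePrime hσ hτ hx hp hWp he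
  refine ⟨_, ⟨hHx, hHcfg, compLabel_visiblePrime⟩, fun H hH => ?_⟩
  obtain ⟨-, hHcfg', hHe⟩ := hH
  obtain ⟨q, hq, hqe⟩ := exists_isTopOf_compLabel H
  rw [hHe] at hqe
  obtain ⟨hWq, hHq⟩ :=
    isInteractionGraph_insert_of_isTopOf hS hT hσ hτ hσc hτc hx hHcfg' hq hqe hneg
  obtain rfl := huniq q hWq hqe
  exact Subtype.ext (Subtype.ext hHq)

theorem receptive_inl (hS : S.toES.IsES) (hT : T.toES.IsES)
    (hσ : IsPreStrategy S (A.dual.par B) σ) (hτ : IsPreStrategy T (B.dual.par C) τ)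
    (hσr : Receptive S (A.dual.par B) σ)
    (hσc : Courteous S (A.dual.par B) σ) (hτc : Courteous T (B.dual.par C) τ)
    (hx : (compES A B C S T σ τ).Config x) {a : A.Evt}
    (hneg : (A.dual.par C).pol (Sum.inl a) = false)
    (hnin : Sum.inl a ∉ compLabel A B C S T σ τ '' x)
    (hcfg : (A.toES.par C.toES).Config (insert (Sum.inl a) (compLabel A B C S T σ τ '' x))) :
    ∃! H, H ∉ x ∧ (compES A B C S T σ τ).Config (insert H x) ∧
      compLabel A B C S T σ τ H = Sum.inl a := by
  have hW := isInteractionGraph_unionGraph hx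
  set zS : Set S.Evt := Sum.inl ⁻¹' (Prod.fst '' unionGraph x)
  have hzS : S.toES.Config zS := (ES.config_par_iff.1 hW.1).1
  have hA := preimage_inl_image_fst_unionGraph hσ hτ hx
  have hnot : a ∉ Sum.inl ⁻¹' (σ '' zS) := by rw [hA]; exact hnin
  have hgameA : A.toES.Config (insert a (Sum.inl ⁻¹' (σ '' zS))) := by
    rw [hA]; exact (ES.config_par_insert_inl_iff.1 hcfg).1
  have hgame : (A.dual.par B).toES.Config (insert (Sum.inl a) (σ '' zS)) :=
    ES.config_par_insert_inl_iff.2 ⟨hgameA, (ES.config_par_iff.1 (hσ.1.1 zS hzS)).2⟩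
  obtain ⟨s, ⟨hsz, hsc, hsa⟩, hsuniq⟩ := hσr zS hzS (Sum.inl a) hneg hnot hgame
  have hsndA : A.toES.Config (insert a (Sum.inl ⁻¹' (Prod.snd '' unionGraph x))) := by
    rw [← preimage_inl_compLabel_image hσ hτ hx]; exact (ES.config_par_insert_inl_iff.1 hcfg).1
  have hsnd : (A.toES.par T.toES).Config (insert (Sum.inl a) (Prod.snd '' unionGraph x)) :=
    ES.config_par_insert_inl_iff.2 ⟨hsndA, (ES.config_par_iff.1 hW.2.1).2⟩
  refine existsUnique_extension hS hT hσ hτ hσc hτc hx hneg (p := (Sum.inl s, Sum.inl a))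
    (fun h => hsz ⟨_, h, rfl⟩) (hW.insert_of_notMem_image
      (ES.config_par_insert_inl_iff.2 ⟨hsc, (ES.config_par_iff.1 hW.1).2⟩) hsnd
      (congrArg Sum.inl hsa) ?_) (congrArg Sum.inl hsa) ?_
  · rintro ⟨u, ⟨q, hq, rfl⟩, hu⟩
    exact hnin ((mem_compLabel_image_iff hσ hτ hx).2 ⟨q, hq, by rw [hu, lmap_inl, hsa]; rfl⟩)
  · intro q hWq hqa
    obtain ⟨s', hqs', hs'a⟩ := lmap_eq_inl_inl_iff.1 hqa
    have hfst := hWq.1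
    rw [image_insert_eq, hqs'] at hfst
    have hs' : s' = s := hsuniq s'
      ⟨fun h => hnot ⟨s', h, hs'a⟩, (ES.config_par_insert_inl_iff.1 hfst).1, hs'a⟩
    exact Prod.ext (hqs'.trans (congrArg _ hs'))
      ((visible_inl_iff (hWq.2.2.1 q (mem_insert _ _))).1 hqa)

theorem receptive_inr (hS : S.toES.IsES) (hT : T.toES.IsES)
    (hσ : IsPreStrategy S (A.dual.par B) σ) (hτ : IsPreStrategy T (B.dual.par C) τ)
    (hτr : Receptive T (B.dual.par C) τ)
    (hσc : Courteous S (A.dual.par B) σ) (hτc : Courteous T (B.dual.par C) τ)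
    (hx : (compES A B C S T σ τ).Config x) {c : C.Evt}
    (hneg : (A.dual.par C).pol (Sum.inr c) = false)
    (hnin : Sum.inr c ∉ compLabel A B C S T σ τ '' x)
    (hcfg : (A.toES.par C.toES).Config (insert (Sum.inr c) (compLabel A B C S T σ τ '' x))) :
    ∃! H, H ∉ x ∧ (compES A B C S T σ τ).Config (insert H x) ∧
      compLabel A B C S T σ τ H = Sum.inr c := by
  have hW := isInteractionGraph_unionGraph hx
  set yT : Set T.Evt := Sum.inr ⁻¹' (Prod.snd '' unionGraph x)
  have hyT : T.toES.Config yT := (ES.config_par_iff.1 hW.2.1).2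
  have hC := preimage_inr_image_snd_unionGraph hσ hτ hx
  have hnot : c ∉ Sum.inr ⁻¹' (τ '' yT) := by rw [hC]; exact hnin
  have hgameC : C.toES.Config (insert c (Sum.inr ⁻¹' (τ '' yT))) := by
    rw [hC]; exact (ES.config_par_insert_inr_iff.1 hcfg).2
  have hgame : (B.dual.par C).toES.Config (insert (Sum.inr c) (τ '' yT)) :=
    ES.config_par_insert_inr_iff.2 ⟨(ES.config_par_iff.1 (hτ.1.1 yT hyT)).1, hgameC⟩
  obtain ⟨t, ⟨hty, htc, htc'⟩, htuniq⟩ := hτr yT hyT (Sum.inr c) hneg hnot hgame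
  have hfstC : C.toES.Config (insert c (Sum.inr ⁻¹' (Prod.fst '' unionGraph x))) := by
    rw [← preimage_inr_compLabel_image hσ hτ hx]; exact (ES.config_par_insert_inr_iff.1 hcfg).2
  have hfst : (S.toES.par C.toES).Config (insert (Sum.inr c) (Prod.fst '' unionGraph x)) :=
    ES.config_par_insert_inr_iff.2 ⟨(ES.config_par_iff.1 hW.1).1, hfstC⟩
  refine existsUnique_extension hS hT hσ hτ hσc hτc hx hneg (p := (Sum.inr c, Sum.inr t))
    (fun h => hty ⟨_, h, rfl⟩) (hW.insert_of_notMem_image hfst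
      (ES.config_par_insert_inr_iff.2 ⟨(ES.config_par_iff.1 hW.2.1).1, htc⟩)
      (rmap_eq_inr_iff.2 ⟨t, rfl, htc'⟩).symm ?_) rfl ?_
  · rintro ⟨u, ⟨q, hq, rfl⟩, hu⟩
    exact hnin ((mem_compLabel_image_iff hσ hτ hx).2 ⟨q, hq, hu⟩)
  · intro q hWq hqc
    obtain ⟨t', hqt', ht'c⟩ := rmap_eq_inr_iff.1 ((hWq.2.2.1 q (mem_insert _ _)).symm.trans hqc)
    have hsnd := hWq.2.1
    rw [image_insert_eq, hqt'] at hsnd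
    have ht' : t' = t := htuniq t'
      ⟨fun h => hnot ⟨t', h, ht'c⟩, (ES.config_par_insert_inr_iff.1 hsnd).2, ht'c⟩
    exact Prod.ext (visible_inr_iff.1 hqc) (hqt'.trans (congrArg _ ht'))

theorem receptive_compLabel (hS : S.toES.IsES) (hT : T.toES.IsES)
    (hσ : IsPreStrategy S (A.dual.par B) σ) (hτ : IsPreStrategy T (B.dual.par C) τ)
    (hσr : Receptive S (A.dual.par B) σ) (hσc : Courteous S (A.dual.par B) σ)
    (hτr : Receptive T (B.dual.par C) τ) (hτc : Courteous T (B.dual.par C) τ) :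
    Receptive (compESP A B C S T σ τ) (A.dual.par C) (compLabel A B C S T σ τ) := by
  rintro x hx (a | c) hneg hnin hcfg
  · exact receptive_inl hS hT hσ hτ hσr hσc hτc hx hneg hnin hcfg
  · exact receptive_inr hS hT hσ hτ hτr hσc hτc hx hneg hnin hcfg

section Courtesy

variable {H H' : (compES A B C S T σ τ).Evt}
  {p' : (S.toES.par C.toES).Evt × (A.toES.par T.toES).Evt}

theorem eq_or_eq_of_imc (hσ : IsPreStrategy S (A.dual.par B) σ)
    (hτ : IsPreStrategy T (B.dual.par C) τ) (himc : (compES A B C S T σ τ).imc H H')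
    (hp : IsTopOf H.val.val p) (hp' : IsTopOf H'.val.val p') (hq : q ∈ H'.val.val)
    (he : lmap A B C S σ q.1 = Sum.map Sum.inl id e)
    (hpq : ReflTransGen (gRel _ _ H'.val.val) p q) : q = p ∨ q = p' := by
  have hW : IsInteractionGraph σ τ H'.val.val := H'.val.prop.1
  have hHq : H.val.val ⊆ primeOf H'.val.val q := by
    rw [eq_primeOf_of_subset hσ hτ hW himc.1.1 hp]
    exact fun r hr => ⟨hr.1, hr.2.trans hpq⟩
  rcases himc.2 (visiblePrime hτ hW hq he) hHq isDownClosedIn_primeOf.1 with h | h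
  · have hq' : IsTopOf H.val.val q := h ▸ isTopOf_primeOf hq
    exact Or.inl (hq'.unique H.val.prop.1.2.2.2.2.2 hp)
  · have hq' : IsTopOf H'.val.val q := by
      have h' : primeOf H'.val.val q = H'.val.val := congrArg (fun K => K.val.val) h
      exact h' ▸ isTopOf_primeOf hq
    exact Or.inr (hq'.unique hW.2.2.2.2.2 hp')

theorem imc_of_lt_of_imc (hσ : IsPreStrategy S (A.dual.par B) σ)
    (hτ : IsPreStrategy T (B.dual.par C) τ) (himc : (compES A B C S T σ τ).imc H H')
    (hp : IsTopOf H.val.val p) (hp' : IsTopOf H'.val.val p')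
    (he : lmap A B C S σ p.1 = Sum.map Sum.inl id e)
    (he' : lmap A B C S σ p'.1 = Sum.map Sum.inl id e') (hlt : (A.toES.par C.toES).lt e e') :
    (A.toES.par C.toES).imc e e' := by
  have hW : IsInteractionGraph σ τ H'.val.val := H'.val.prop.1
  refine ⟨hlt, fun e₀ h₁ h₂ => ?_⟩
  obtain ⟨q, hq, he₀⟩ := exists_visible_of_label_le hW hp'.1 he' h₂
  by_cases hne : e₀ = e
  · exact Or.inl hne
  have hpq := gRel_of_label_lt hW (himc.1.1 hp.1) hq he he₀ ⟨h₁, Ne.symm hne⟩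
  rcases eq_or_eq_of_imc hσ hτ himc hp hp' hq he₀ (.single hpq) with rfl | rfl
  exacts [(hne (label_unique he₀ he)).elim, Or.inr (label_unique he₀ he')]

theorem courteous_compLabel (hS : S.toES.IsES) (hT : T.toES.IsES)
    (hσ : IsPreStrategy S (A.dual.par B) σ) (hτ : IsPreStrategy T (B.dual.par C) τ)
    (hσc : Courteous S (A.dual.par B) σ) (hτc : Courteous T (B.dual.par C) τ) :
    Courteous (compESP A B C S T σ τ) (A.dual.par C) (compLabel A B C S T σ τ) := by
  intro H H' himc hpol
  change (compES A B C S T σ τ).imc H H' at himc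
  obtain ⟨p, hp, he⟩ := exists_isTopOf_compLabel H
  obtain ⟨p', hp', he'⟩ := exists_isTopOf_compLabel H'
  have hW : IsInteractionGraph σ τ H'.val.val := H'.val.prop.1
  have hpW : p ∈ H'.val.val := himc.1.1 hp.1
  have hpp' : p ≠ p' := by
    rintro rfl
    exact himc.1.2 (Subtype.ext (Subtype.ext ((eq_primeOf_of_subset hσ hτ hW himc.1.1 hp).trans
      (eq_primeOf_of_subset hσ hτ hW subset_rfl hp').symm)))
  -- the same relation, stated over `A` so that `imc_of_lt_of_imc` does not infer `A.dual`
  change (A.toES.par C.toES).imc _ _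
  refine imc_of_lt_of_imc hσ hτ himc hp hp' he he' ?_
  by_cases hpos : (A.dual.par C).pol (compLabel A B C S T σ τ H) = true
  · obtain ⟨r, hpr, -⟩ := (hp'.2 p hpW).cases_head.resolve_left hpp'
    obtain ⟨q, hq, e₁, he₁, hlt, -⟩ :=
      exists_visible_gt_of_pos hS hT hσ hτ hσc hτc hW hpW he hpos hpr
    rcases eq_or_eq_of_imc hσ hτ himc hp hp' hq he₁
      (.single (gRel_of_label_lt hW hpW hq he he₁ hlt)) with rfl | rfl
    · exact (hlt.2 (label_unique he he₁)).elim
    · rwa [label_unique he₁ he'] at hlt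
  · have hneg : (A.dual.par C).pol (compLabel A B C S T σ τ H') = false := by
      simp only [Bool.not_eq_true] at hpos
      simpa [compESP, hpos] using hpol
    obtain ⟨r, hpr, hrp'⟩ := (hp'.2 p hpW).cases_tail.resolve_left hpp'.symm
    obtain ⟨q, hq, e₀, he₀, hlt, hrq⟩ :=
      exists_visible_lt_of_neg hS hT hσ hτ hσc hτc hW hp'.1 he' hneg hrp'
    rcases eq_or_eq_of_imc hσ hτ himc hp hp' hq he₀ (hpr.trans hrq) with rfl | rfl
    · rwa [label_unique he₀ he] at hlt
    · exact (hlt.2 (label_unique he₀ he')).elim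

end Courtesy

end Composition

theorem composition_preserves_strategies_general
    (A B C S T : ESP)
    (hS : S.toES.IsES) (hT : T.toES.IsES)
    (σ : S.Evt → A.Evt ⊕ B.Evt) (τ : T.Evt → B.Evt ⊕ C.Evt)
    (hσ : IsPreStrategy S (A.dual.par B) σ)
    (hτ : IsPreStrategy T (B.dual.par C) τ)
    (hσr : Receptive S (A.dual.par B) σ) (hσc : Courteous S (A.dual.par B) σ)
    (hτr : Receptive T (B.dual.par C) τ) (hτc : Courteous T (B.dual.par C) τ) :
    IsPreStrategy (compESP A B C S T σ τ) (A.dual.par C)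
      (compLabel A B C S T σ τ) ∧
    Receptive (compESP A B C S T σ τ) (A.dual.par C)
      (compLabel A B C S T σ τ) ∧
    Courteous (compESP A B C S T σ τ) (A.dual.par C)
      (compLabel A B C S T σ τ) :=
  ⟨isPreStrategy_compLabel hσ hτ, receptive_compLabel hS hT hσ hτ hσr hσc hτr hτc,
    courteous_compLabel hS hT hσ hτ hσc hτc⟩

/-- the composition `τ ⊙ σ` of receptive and courteous
pre-strategies (i.e. strategies) `σ : S → A^⊥ ∥ B` and `τ : T → B^⊥ ∥ C` is a
receptive and courteous pre-strategy (i.e. a strategy) on `A^⊥ ∥ C`. -/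
theorem composition_preserves_strategies
    (A B C S T : ESP) (hA : A.toES.IsES) (hB : B.toES.IsES) (hC : C.toES.IsES)
    (hS : S.toES.IsES) (hT : T.toES.IsES)
    (σ : S.Evt → A.Evt ⊕ B.Evt) (τ : T.Evt → B.Evt ⊕ C.Evt)
    (hσ : IsPreStrategy S (A.dual.par B) σ)
    (hτ : IsPreStrategy T (B.dual.par C) τ)
    (hσr : Receptive S (A.dual.par B) σ) (hσc : Courteous S (A.dual.par B) σ)
    (hτr : Receptive T (B.dual.par C) τ) (hτc : Courteous T (B.dual.par C) τ) :
    IsPreStrategy (compESP A B C S T σ τ) (A.dual.par C)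
      (compLabel A B C S T σ τ) ∧
    Receptive (compESP A B C S T σ τ) (A.dual.par C)
      (compLabel A B C S T σ τ) ∧
    Courteous (compESP A B C S T σ τ) (A.dual.par C)
      (compLabel A B C S T σ τ) :=
  composition_preserves_strategies_general A B C S T hS hT σ τ hσ hτ hσr hσc hτr hτc
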